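/- arXiv:1207.5101 — 5 statements merged into one kernel-verified Lean document; each statement's English description precedes it below -/
import Mathlib

section
/- Let K be a number field and G a finite-index subgroup of O_K^×. For x ∈ K̄ let Ω_G(x) denote the closure in K̄ of the set {u·x + σ(γ) : u ∈ G, γ ∈ O_K}. Then m_K̄(x) = min_{x' ∈ Ω_G(x)} m_K̄(x') (in particular the minimum over the closure is attained), and moreover m_K̄(x) ≤ ‖x'‖^d for every x' ∈ Ω_G(x), where ‖x'‖ = (Σ_{i=1}^{r₁+r₂} |x'_i|²)^{1/2}. -/
open NumberField NumberField.InfinitePlace Module Filter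
open scoped Classical

noncomputable section

variable (K : Type) [Field K] [NumberField K]

/-- The inhomogeneous minimum `m_K̄(x)` of a point of the mixed space
`K̄ = ℝ^r₁ × ℂ^r₂`, namely `inf_{γ ∈ O_K} |N_K̄(x - σ(γ))|`. -/
def mKbar (x : mixedEmbedding.mixedSpace K) : ℝ :=
  ⨅ γ : 𝓞 K, mixedEmbedding.norm (x - mixedEmbedding K (γ : K))

/-- The Euclidean minimum `m_K(x) = inf_{y ∈ x + O_K} |N_K(y)|` of an element of `K`. -/
def mK (x : K) : ℝ :=
  ⨅ γ : 𝓞 K, |(Algebra.norm ℚ (x - (γ : K)) : ℝ)|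

/-- The inhomogeneous minimum `M(K̄) = sup_{x ∈ K̄} m_K̄(x)`. -/
def MKbar : ℝ := ⨆ x : mixedEmbedding.mixedSpace K, mKbar K x

/-- The Euclidean minimum `M(K) = sup_{x ∈ K} m_K(x)`. -/
def MK : ℝ := ⨆ x : K, mK K x

/-- A number field is CM if it is totally complex and is a quadratic extension
of a totally real subfield. -/
def IsCM : Prop :=
  (∀ σ : K →+* ℂ, ¬ ComplexEmbedding.IsReal σ) ∧
    ∃ F : Subfield K, (∀ τ : F →+* ℂ, ComplexEmbedding.IsReal τ) ∧ Module.finrank F K = 2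

/-- The Euclidean (ℓ²) norm on the mixed space `ℝ^r₁ × ℂ^r₂`. -/
def euclNorm (x : mixedEmbedding.mixedSpace K) : ℝ :=
  Real.sqrt ((∑ w : {w : InfinitePlace K // IsReal w}, ‖x.1 w‖ ^ 2) +
    ∑ w : {w : InfinitePlace K // IsComplex w}, ‖x.2 w‖ ^ 2)

/-- The closure of the `(G, O_K)`-orbit `{u·x + σ(γ)}` of `x` in the mixed space. -/
def orbitClosure (G : Subgroup (𝓞 K)ˣ) (x : mixedEmbedding.mixedSpace K) :
    Set (mixedEmbedding.mixedSpace K) :=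
  closure {y | ∃ u ∈ G, ∃ γ : 𝓞 K,
    y = mixedEmbedding K (((u : (𝓞 K)ˣ) : 𝓞 K) : K) * x + mixedEmbedding K (γ : K)}

open NumberField.mixedEmbedding in
lemma continuous_normAtPlace (w : InfinitePlace K) :
    Continuous (normAtPlace w : mixedSpace K → ℝ) := by
  rcases isReal_or_isComplex w with hw | hw
  · have : (normAtPlace w : mixedSpace K → ℝ) = fun x => ‖x.1 ⟨w, hw⟩‖ :=
      funext fun x => normAtPlace_apply_of_isReal hw x
    rw [this]; fun_prop
  · have : (normAtPlace w : mixedSpace K → ℝ) = fun x => ‖x.2 ⟨w, hw⟩‖ :=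
      funext fun x => normAtPlace_apply_of_isComplex hw x
    rw [this]; fun_prop

open NumberField.mixedEmbedding in
lemma continuous_mixedNorm :
    Continuous (mixedEmbedding.norm : mixedSpace K → ℝ) := by
  have : (mixedEmbedding.norm : mixedSpace K → ℝ)
      = fun x => ∏ w, (normAtPlace w x) ^ (mult w) :=
    funext fun x => mixedEmbedding.norm_apply x
  rw [this]
  exact continuous_finset_prod _ fun w _ => (continuous_normAtPlace K w).pow _

lemma continuous_euclNorm : Continuous (euclNorm K) := by
  unfold euclNorm
  fun_prop

lemma euclNorm_nonneg (x : mixedEmbedding.mixedSpace K) : 0 ≤ euclNorm K x :=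
  Real.sqrt_nonneg _

open NumberField.mixedEmbedding in
lemma normAtPlace_le_euclNorm (w : InfinitePlace K) (x : mixedSpace K) :
    normAtPlace w x ≤ euclNorm K x := by
  unfold euclNorm
  have h1 : (0:ℝ) ≤ ∑ w : {w : InfinitePlace K // IsReal w}, ‖x.1 w‖ ^ 2 :=
    Finset.sum_nonneg fun _ _ => sq_nonneg _
  have h2 : (0:ℝ) ≤ ∑ w : {w : InfinitePlace K // IsComplex w}, ‖x.2 w‖ ^ 2 :=
    Finset.sum_nonneg fun _ _ => sq_nonneg _
  rcases isReal_or_isComplex w with hw | hw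
  · rw [normAtPlace_apply_of_isReal hw]
    rw [Real.le_sqrt (norm_nonneg _) (add_nonneg h1 h2)]
    refine le_trans ?_ (le_add_of_nonneg_right h2)
    exact Finset.single_le_sum (f := fun w : {w : InfinitePlace K // IsReal w} => ‖x.1 w‖ ^ 2)
      (fun _ _ => sq_nonneg _) (Finset.mem_univ (⟨w, hw⟩ : {w : InfinitePlace K // IsReal w}))
  · rw [normAtPlace_apply_of_isComplex hw]
    rw [Real.le_sqrt (norm_nonneg _) (add_nonneg h1 h2)]
    refine le_trans ?_ (le_add_of_nonneg_left h1)
    exact Finset.single_le_sum (f := fun w : {w : InfinitePlace K // IsComplex w} => ‖x.2 w‖ ^ 2)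
      (fun _ _ => sq_nonneg _) (Finset.mem_univ (⟨w, hw⟩ : {w : InfinitePlace K // IsComplex w}))

open NumberField.mixedEmbedding in
lemma mixedNorm_le_euclNorm_pow (x : mixedSpace K) :
    mixedEmbedding.norm x ≤ euclNorm K x ^ finrank ℚ K := by
  rw [mixedEmbedding.norm_apply, ← sum_mult_eq (K := K), ← Finset.prod_pow_eq_pow_sum]
  exact Finset.prod_le_prod (fun w _ => pow_nonneg (normAtPlace_nonneg w x) _)
    (fun w _ => pow_le_pow_left₀ (normAtPlace_nonneg w x) (normAtPlace_le_euclNorm K w x) _)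

lemma mKbar_bddBelow (x : mixedEmbedding.mixedSpace K) :
    BddBelow (Set.range fun γ : 𝓞 K =>
      mixedEmbedding.norm (x - mixedEmbedding K (γ : K))) :=
  ⟨0, by rintro r ⟨γ, rfl⟩; exact mixedEmbedding.norm_nonneg _⟩

lemma mKbar_le (x : mixedEmbedding.mixedSpace K) (γ : 𝓞 K) :
    mKbar K x ≤ mixedEmbedding.norm (x - mixedEmbedding K (γ : K)) :=
  ciInf_le (mKbar_bddBelow K x) γ

open NumberField.mixedEmbedding in
lemma mKbar_orbit (u : (𝓞 K)ˣ) (γ : 𝓞 K) (x : mixedSpace K) :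
    mKbar K (mixedEmbedding K (((u : 𝓞 K)) : K) * x + mixedEmbedding K (γ : K)) = mKbar K x := by
  have hk : ((u : 𝓞 K) : K) * (((u⁻¹ : (𝓞 K)ˣ) : 𝓞 K) : K) = 1 := by
    exact_mod_cast congrArg (fun t : 𝓞 K => (t : K)) u.mul_inv
  have key : ∀ δ : 𝓞 K,
      mixedEmbedding K (((u : 𝓞 K)) : K) * x + mixedEmbedding K (γ : K)
        - mixedEmbedding K (δ : K)
      = mixedEmbedding K (((u : 𝓞 K)) : K) *
          (x - mixedEmbedding K ((((u⁻¹ : (𝓞 K)ˣ) : 𝓞 K) * (δ - γ) : 𝓞 K) : K)) := by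
    intro δ
    rw [mul_sub, ← map_mul]
    have : (((u : 𝓞 K)) : K) * ((((u⁻¹ : (𝓞 K)ˣ) : 𝓞 K) * (δ - γ) : 𝓞 K) : K)
        = ((δ : K)) - ((γ : K)) := by
      push_cast
      rw [← mul_assoc, hk, one_mul]
    rw [this, map_sub]
    ring
  have hnorm : ∀ δ : 𝓞 K,
      mixedEmbedding.norm (mixedEmbedding K (((u : 𝓞 K)) : K) * x
        + mixedEmbedding K (γ : K) - mixedEmbedding K (δ : K))
      = mixedEmbedding.norm
          (x - mixedEmbedding K ((((u⁻¹ : (𝓞 K)ˣ) : 𝓞 K) * (δ - γ) : 𝓞 K) : K)) := by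
    intro δ
    rw [key δ, map_mul, norm_unit, one_mul]
  unfold mKbar
  simp_rw [hnorm]
  set e : 𝓞 K ≃ 𝓞 K :=
    { toFun := fun δ => ((u⁻¹ : (𝓞 K)ˣ) : 𝓞 K) * (δ - γ)
      invFun := fun δ => (u : 𝓞 K) * δ + γ
      left_inv := fun δ => by
        show (u : 𝓞 K) * (((u⁻¹ : (𝓞 K)ˣ) : 𝓞 K) * (δ - γ)) + γ = δ
        rw [← mul_assoc, u.mul_inv, one_mul]
        ring
      right_inv := fun δ => by
        show ((u⁻¹ : (𝓞 K)ˣ) : 𝓞 K) * ((u : 𝓞 K) * δ + γ - γ) = δ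
        rw [add_sub_cancel_right, ← mul_assoc, u.inv_mul, one_mul] } with he
  have : (fun δ : 𝓞 K => mixedEmbedding.norm
      (x - mixedEmbedding K ((((u⁻¹ : (𝓞 K)ˣ) : 𝓞 K) * (δ - γ) : 𝓞 K) : K)))
      = (fun δ : 𝓞 K => mixedEmbedding.norm (x - mixedEmbedding K (δ : K))) ∘ e := rfl
  rw [this, iInf, iInf, Set.range_comp, e.surjective.range_eq, Set.image_univ]

/-- For a finite-index subgroup `G` of the units, `m_K̄(x)` is the minimum of `m_K̄` over the
closure of the orbit of `x`, and is at most `‖x'‖^d` for every `x'` in this closure. -/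
theorem statement7 (G : Subgroup (𝓞 K)ˣ) (hG : G.FiniteIndex)
    (x : mixedEmbedding.mixedSpace K) :
    (∃ x' ∈ orbitClosure K G x, mKbar K x' = mKbar K x) ∧
    (∀ x' ∈ orbitClosure K G x, mKbar K x ≤ mKbar K x') ∧
    (∀ x' ∈ orbitClosure K G x, mKbar K x ≤ euclNorm K x' ^ finrank ℚ K) := by
  have hxS : x ∈ {y | ∃ u ∈ G, ∃ γ : 𝓞 K,
      y = mixedEmbedding K (((u : (𝓞 K)ˣ) : 𝓞 K) : K) * x + mixedEmbedding K (γ : K)} :=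
    ⟨1, G.one_mem, 0, by simp⟩
  have horb : ∀ y ∈ {y | ∃ u ∈ G, ∃ γ : 𝓞 K,
      y = mixedEmbedding K (((u : (𝓞 K)ˣ) : 𝓞 K) : K) * x + mixedEmbedding K (γ : K)},
      mKbar K y = mKbar K x := by
    rintro y ⟨u, hu, γ, rfl⟩
    exact mKbar_orbit K u γ x
  have key2 : ∀ x' ∈ orbitClosure K G x, mKbar K x ≤ mKbar K x' := by
    intro x' hx'
    obtain ⟨y, hy, hlim⟩ := mem_closure_iff_seq_limit.mp hx'
    refine le_ciInf fun γ => ?_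
    have hcont : Tendsto (fun n => mixedEmbedding.norm (y n - mixedEmbedding K (γ : K)))
        atTop (nhds (mixedEmbedding.norm (x' - mixedEmbedding K (γ : K)))) :=
      ((continuous_mixedNorm K).tendsto _).comp (hlim.sub tendsto_const_nhds)
    refine ge_of_tendsto hcont (Eventually.of_forall fun n => ?_)
    rw [← horb (y n) (hy n)]
    exact mKbar_le K (y n) γ
  have key3 : ∀ x' ∈ orbitClosure K G x, mKbar K x ≤ euclNorm K x' ^ finrank ℚ K := by
    intro x' hx'
    obtain ⟨y, hy, hlim⟩ := mem_closure_iff_seq_limit.mp hx'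
    have hcont : Tendsto (fun n => euclNorm K (y n) ^ finrank ℚ K)
        atTop (nhds (euclNorm K x' ^ finrank ℚ K)) :=
      (((continuous_euclNorm K).tendsto _).comp hlim).pow _
    refine ge_of_tendsto hcont (Eventually.of_forall fun n => ?_)
    calc mKbar K x = mKbar K (y n) := (horb _ (hy n)).symm
      _ ≤ mixedEmbedding.norm (y n - mixedEmbedding K ((0 : 𝓞 K) : K)) := mKbar_le K (y n) 0
      _ = mixedEmbedding.norm (y n) := by simp
      _ ≤ euclNorm K (y n) ^ finrank ℚ K := mixedNorm_le_euclNorm_pow K (y n)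
  exact ⟨⟨x, subset_closure hxS, rfl⟩, key2, key3⟩

end
end

section
/- Let K be a number field of degree d and let x ∈ K with q·x ∈ O_K for a positive integer q. Then m_K(x) ∈ q^{−d}·ℤ (in particular m_K(x) is rational), and the infimum defining m_K(x) is attained: there exists y ∈ x + O_K with |N_K(y)| = m_K(x). -/
open NumberField NumberField.InfinitePlace Module Filter

noncomputable section

variable (K : Type) [Field K] [NumberField K]

/-- If `x ∈ K` and `q·x ∈ O_K` for a positive integer `q`, then `m_K(x) ∈ q^{-d}·ℤ` and the
infimum defining `m_K(x)` is attained. -/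
theorem statement8 (x : K) (q : ℕ) (hq : 0 < q) (hx : ∃ γ : 𝓞 K, (γ : K) = q • x) :
    (∃ n : ℤ, mK K x = (n : ℝ) / (q : ℝ) ^ finrank ℚ K) ∧
    ∃ γ : 𝓞 K, |(Algebra.norm ℚ (x - (γ : K)) : ℝ)| = mK K x := by
  obtain ⟨γ₀, hγ₀⟩ := hx
  set d := finrank ℚ K with hd
  have hq0 : (0:ℝ) < (q:ℝ)^d := by positivity
  set g : 𝓞 K → ℕ := fun γ => (Algebra.norm ℤ (γ₀ - q • γ)).natAbs with hg
  have key : ∀ γ : 𝓞 K, |(Algebra.norm ℚ (x - (γ:K)) : ℝ)| = (g γ : ℝ) / (q:ℝ)^d := by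
    intro γ
    have h1 : ((γ₀ - q • γ : 𝓞 K) : K) = algebraMap ℚ K q * (x - (γ:K)) := by
      push_cast [hγ₀]
      rw [Algebra.smul_def, Algebra.smul_def, eq_natCast (algebraMap ℕ K)]
      ring
    have h2 : (Algebra.norm ℤ (γ₀ - q • γ) : ℚ) = Algebra.norm ℚ ((γ₀ - q • γ : 𝓞 K) : K) :=
      Algebra.coe_norm_int _
    rw [h1, map_mul (Algebra.norm ℚ), Algebra.norm_algebraMap, ← hd] at h2
    have : ((g γ : ℤ) : ℚ) = |(Algebra.norm ℤ (γ₀ - q • γ) : ℚ)| := by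
      rw [hg]; push_cast [Nat.cast_natAbs]; rfl
    rw [h2, abs_mul, abs_pow, Nat.abs_cast] at this
    have h3 : ((g γ : ℝ)) = (q:ℝ)^d * |(Algebra.norm ℚ (x - (γ:K)) : ℝ)| := by
      have := congrArg (fun r : ℚ => (r : ℝ)) this
      simpa [abs_mul, abs_pow] using this
    rw [h3]; field_simp
  -- attained: the range of g has a minimum
  have hne : (Set.range g).Nonempty := ⟨g γ₀, γ₀, rfl⟩
  obtain ⟨γm, hγm⟩ : sInf (Set.range g) ∈ Set.range g := Nat.sInf_mem hne
  set m := sInf (Set.range g) with hm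
  have hmin : ∀ b ∈ Set.range g, m ≤ b := fun b hb => Nat.sInf_le hb
  have hfm : ∀ γ : 𝓞 K, |(Algebra.norm ℚ (x - (γm:K)) : ℝ)| ≤ |(Algebra.norm ℚ (x - (γ:K)) : ℝ)| := by
    intro γ
    rw [key, key, hγm]
    have h : (m:ℝ) ≤ (g γ : ℝ) := by exact_mod_cast hmin (g γ) ⟨γ, rfl⟩
    gcongr
  have hattain : mK K x = |(Algebra.norm ℚ (x - (γm:K)) : ℝ)| := by
    refine le_antisymm (ciInf_le ⟨0, ?_⟩ γm) (le_ciInf hfm)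
    rintro r ⟨γ, rfl⟩
    positivity
  refine ⟨⟨(m : ℤ), ?_⟩, γm, hattain.symm⟩
  rw [hattain, key, hγm]
  push_cast
  rfl


end
end

section
/- Let K be a non-CM number field of unit rank r ≥ 2 and let G be a finite-index subgroup of O_K^×. Then there exists u ∈ G such that ℚ(u^k) = K for every nonzero integer k. -/
open NumberField NumberField.InfinitePlace Module Filter

noncomputable section

variable (K : Type) [Field K] [NumberField K]

section AuxStatement13

set_option maxSynthPendingDepth 2
set_option synthInstance.maxHeartbeats 1000000
set_option maxHeartbeats 4000000
set_option linter.unusedSectionVars false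
set_option linter.unusedVariables false

open NumberField.Units Pointwise

variable {K} [NumberField K]

private lemma two_le_finrank' (A : Type) [Field A] [Algebra A K] [FiniteDimensional A K]
    (h : ¬ Function.Surjective (algebraMap A K)) : 2 ≤ Module.finrank A K := by
  have h1 : 0 < Module.finrank A K := Module.finrank_pos
  rcases Nat.lt_or_ge (Module.finrank A K) 2 with h2 | h2
  · exfalso
    have he : Module.finrank A K = 1 := by omega
    have hbt := Subalgebra.bot_eq_top_of_finrank_eq_one (F := A) (E := K) he
    refine h fun x => ?_
    have hx : x ∈ (⊥ : Subalgebra A K) := hbt ▸ Algebra.mem_top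
    exact Algebra.mem_bot.mp hx
  · exact h2

open IntermediateField in
private lemma exists_embs {x : K} (h : ℚ⟮x⟯ ≠ ⊤) :
    ∃ σ τ : K →+* ℂ, σ ≠ τ ∧ σ x = τ x := by
  set F := ℚ⟮x⟯ with hF
  letI : Algebra F ℂ := (IsAlgClosed.lift (R := ℚ) (S := F) (M := ℂ)).toRingHom.toAlgebra
  letI : FiniteDimensional F K := FiniteDimensional.right ℚ F K
  have hsurj : ¬ Function.Surjective (algebraMap F K) := by
    intro hs
    apply h
    rw [eq_top_iff]
    intro z _
    obtain ⟨y, hy⟩ := hs z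
    rw [← hy]
    exact y.2
  have h2 : 2 ≤ Module.finrank F K := two_le_finrank' F hsurj
  have hcard : Fintype.card (K →ₐ[F] ℂ) = Module.finrank F K := AlgHom.card F K ℂ
  obtain ⟨φ, ψ, hne⟩ := Fintype.exists_pair_of_one_lt_card (α := K →ₐ[F] ℂ) (by omega)
  have hx : x ∈ F := mem_adjoin_simple_self ℚ x
  have hxeq : (algebraMap F K) ⟨x, hx⟩ = x := rfl
  refine ⟨φ.toRingHom, ψ.toRingHom, ?_, ?_⟩
  · intro hEq
    exact hne (AlgHom.ext fun z => DFunLike.congr_fun hEq z)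
  · show φ x = ψ x
    rw [← hxeq, φ.commutes, ψ.commutes]

/-- The homomorphism `u ↦ σ(u)/τ(u)` from units to `ℂˣ`. -/
private def embUnitHom (σ τ : K →+* ℂ) : (𝓞 K)ˣ →* ℂˣ :=
  ((Units.map σ.toMonoidHom).comp (Units.map (algebraMap (𝓞 K) K).toMonoidHom)) /
  ((Units.map τ.toMonoidHom).comp (Units.map (algebraMap (𝓞 K) K).toMonoidHom))

private lemma embUnitHom_val (σ τ : K →+* ℂ) (u : (𝓞 K)ˣ) :
    ((embUnitHom σ τ u : ℂˣ) : ℂ)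
      = σ (algebraMap (𝓞 K) K (u : 𝓞 K)) / τ (algebraMap (𝓞 K) K (u : 𝓞 K)) := by
  simp [embUnitHom]

/-- The subgroup of units `u` with `σ(u)/τ(u)` a root of unity. -/
private def HH (σ τ : K →+* ℂ) : Subgroup (𝓞 K)ˣ :=
  (CommGroup.torsion ℂˣ).comap (embUnitHom σ τ)

private lemma mem_HH_iff {σ τ : K →+* ℂ} {u : (𝓞 K)ˣ} :
    u ∈ HH σ τ ↔ IsOfFinOrder (embUnitHom σ τ u) := Iff.rfl


private lemma pow_cond_of_finiteIndex {σ τ : K →+* ℂ} (hfi : (HH σ τ).FiniteIndex)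
    (u : (𝓞 K)ˣ) : ∃ e : ℕ, 0 < e ∧
      σ ((algebraMap (𝓞 K) K (u : 𝓞 K)) ^ e) = τ ((algebraMap (𝓞 K) K (u : 𝓞 K)) ^ e) := by
  set n := (HH σ τ).index with hn
  have hn0 : n ≠ 0 := hfi.index_ne_zero
  have hv : u ^ n ∈ HH σ τ := Subgroup.pow_index_mem _ u
  obtain ⟨m, hm, hpow⟩ := isOfFinOrder_iff_pow_eq_one.mp (mem_HH_iff.mp hv)
  refine ⟨n * m, by positivity, ?_⟩
  have h1 : (embUnitHom σ τ u) ^ (n * m) = 1 := by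
    rw [pow_mul, ← map_pow]; exact hpow
  have h2 : ((embUnitHom σ τ u : ℂˣ) : ℂ) ^ (n * m) = 1 := by
    rw [← Units.val_pow_eq_pow_val, h1, Units.val_one]
  rw [embUnitHom_val, div_pow] at h2
  have hτ0 : τ (algebraMap (𝓞 K) K (u : 𝓞 K)) ^ (n * m) ≠ 0 :=
    pow_ne_zero _ ((map_ne_zero τ).mpr (NumberField.Units.coe_ne_zero u))
  rw [div_eq_one_iff_eq hτ0] at h2
  rw [map_pow, map_pow]
  exact h2


private lemma isCM_of_finiteIndex {σ τ : K →+* ℂ} (hστ : σ ≠ τ)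
    (hidx : (HH σ τ).FiniteIndex) :
    (∀ σ' : K →+* ℂ, ¬ ComplexEmbedding.IsReal σ') ∧
      ∃ F : Subfield K, (∀ τ' : F →+* ℂ, ComplexEmbedding.IsReal τ') ∧ Module.finrank F K = 2 := by
  classical
  have hfi : ∀ i : Fin (rank K), ∃ e : ℕ, 0 < e ∧
      σ ((algebraMap (𝓞 K) K ((fundSystem K i : (𝓞 K)ˣ) : 𝓞 K)) ^ e)
        = τ ((algebraMap (𝓞 K) K ((fundSystem K i : (𝓞 K)ˣ) : 𝓞 K)) ^ e) :=
    fun i => pow_cond_of_finiteIndex hidx (fundSystem K i)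
  set E : Subfield K := σ.eqLocusField τ with hE
  letI : FiniteDimensional ℚ E :=
    FiniteDimensional.of_injective (E.subtype.toRatAlgHom.toLinearMap) Subtype.val_injective
  letI : NumberField E := ⟨⟩
  letI : IsScalarTower ℚ E K := IsScalarTower.of_algebraMap_eq' (Subsingleton.elim _ _)
  letI : FiniteDimensional E K := FiniteDimensional.right ℚ E K
  -- E is proper
  have hEK : ¬ Function.Surjective (algebraMap E K) := by
    intro hs
    obtain ⟨x0, hx0⟩ := DFunLike.ne_iff.mp hστ
    obtain ⟨y, hy⟩ := hs x0
    exact hx0 (hy ▸ y.2)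
  have hd : 2 ≤ Module.finrank E K := two_le_finrank' E hEK
  -- build units of 𝓞 E from powers of the fundamental system
  choose e he hσe using hfi
  set v : Fin (rank K) → (𝓞 K)ˣ := fundSystem K with hv
  set w : Fin (rank K) → (𝓞 K)ˣ := fun i => v i ^ e i with hw
  have hwa : ∀ i, algebraMap (𝓞 K) K ((w i : 𝓞 K)) ∈ E := by
    intro i
    show σ _ = τ _
    simpa only [hw, Units.val_pow_eq_pow_val, map_pow] using hσe i
  have hwab : ∀ i, algebraMap (𝓞 K) K ((w i : 𝓞 K)) *
      algebraMap (𝓞 K) K (((w i)⁻¹ : (𝓞 K)ˣ) : 𝓞 K) = 1 := by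
    intro i
    rw [← map_mul]
    simp
  have hwb : ∀ i, algebraMap (𝓞 K) K (((w i)⁻¹ : (𝓞 K)ˣ) : 𝓞 K) ∈ E := by
    intro i
    rw [← inv_eq_of_mul_eq_one_right (hwab i)]
    exact E.inv_mem (hwa i)
  -- integral elements of E
  have hint : ∀ i, IsIntegral ℤ (⟨_, hwa i⟩ : E) := by
    intro i
    rw [← isIntegral_algHom_iff (E.subtype.toIntAlgHom) Subtype.val_injective]
    exact RingOfIntegers.isIntegral_coe ((w i : 𝓞 K))
  have hint' : ∀ i, IsIntegral ℤ (⟨_, hwb i⟩ : E) := by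
    intro i
    rw [← isIntegral_algHom_iff (E.subtype.toIntAlgHom) Subtype.val_injective]
    exact RingOfIntegers.isIntegral_coe (((w i)⁻¹ : (𝓞 K)ˣ) : 𝓞 K)
  have hmul1 : ∀ i, ((⟨⟨_, hwa i⟩, hint i⟩ : 𝓞 E) * ⟨⟨_, hwb i⟩, hint' i⟩) = 1 := by
    intro i
    exact RingOfIntegers.ext (Subtype.ext (hwab i))
  set uE : Fin (rank K) → (𝓞 E)ˣ := fun i => Units.mkOfMulEqOne _ _ (hmul1 i) with huE
  set ρ : (𝓞 E)ˣ →* (𝓞 K)ˣ :=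
    Units.map (RingOfIntegers.mapRingHom E.subtype).toMonoidHom with hρdef
  have hρ : ∀ i, ρ (uE i) = w i := by
    intro i
    exact Units.ext (RingOfIntegers.ext rfl)
  -- quotient maps
  have htors : Units.torsion ↥E ≤ Subgroup.comap ρ (Units.torsion K) := by
    intro x hx
    exact ρ.isOfFinOrder hx
  set qmap : ((𝓞 ↥E)ˣ ⧸ Units.torsion ↥E) →* ((𝓞 K)ˣ ⧸ Units.torsion K) :=
    QuotientGroup.map _ _ ρ htors with hqmap
  set L : Additive ((𝓞 ↥E)ˣ ⧸ Units.torsion ↥E) →ₗ[ℤ] Additive ((𝓞 K)ˣ ⧸ Units.torsion K) :=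
    (MonoidHom.toAdditive qmap).toIntLinearMap with hL
  set c : Fin (rank K) → Additive ((𝓞 ↥E)ˣ ⧸ Units.torsion ↥E) :=
    fun i => Additive.ofMul (QuotientGroup.mk (uE i)) with hc
  have hLc : ∀ i, L (c i) = (e i : ℤ) • (basisModTorsion K i) := by
    intro i
    calc L (c i) = Additive.ofMul (QuotientGroup.mk (ρ (uE i))) := rfl
      _ = Additive.ofMul ((QuotientGroup.mk (v i) : (𝓞 K)ˣ ⧸ Units.torsion K) ^ (e i)) := by
          rw [hρ i]; rfl
      _ = (e i : ℤ) • (basisModTorsion K i) := by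
          rw [ofMul_pow, hv, fundSystem_mk, natCast_zsmul]
  -- linear independence
  letI : Module.Finite ℤ (Additive ((𝓞 ↥E)ˣ ⧸ Units.torsion ↥E)) :=
    Module.Finite.of_basis (basisModTorsion ↥E)
  have hindep : LinearIndependent ℤ c := by
    rw [Fintype.linearIndependent_iff]
    intro g hg i
    have h0 : L (∑ j, g j • c j) = 0 := by rw [hg, map_zero]
    rw [map_sum] at h0
    simp_rw [map_smul, hLc, smul_smul] at h0
    have := Fintype.linearIndependent_iff.mp (basisModTorsion K).linearIndependent
      (fun j => g j * (e j : ℤ)) h0 i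
    have he0 : (e i : ℤ) ≠ 0 := Int.natCast_ne_zero.mpr (Nat.pos_iff_ne_zero.mp (he i))
    exact (mul_eq_zero.mp this).resolve_right he0
  have hrankle : rank K ≤ rank ↥E := by
    have h1 := hindep.fintype_card_le_finrank
    rwa [Fintype.card_fin, rank_modTorsion] at h1
  -- numerology
  have e1 : nrRealPlaces K + 2 * nrComplexPlaces K = finrank ℚ K :=
    card_add_two_mul_card_eq_rank K
  have e2 : nrRealPlaces ↥E + 2 * nrComplexPlaces ↥E = finrank ℚ ↥E :=
    card_add_two_mul_card_eq_rank ↥E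
  have e3 : Fintype.card (InfinitePlace K) = nrRealPlaces K + nrComplexPlaces K :=
    card_eq_nrRealPlaces_add_nrComplexPlaces K
  have e4 : Fintype.card (InfinitePlace ↥E) = nrRealPlaces ↥E + nrComplexPlaces ↥E :=
    card_eq_nrRealPlaces_add_nrComplexPlaces ↥E
  have e5 : finrank ℚ ↥E * finrank ↥E K = finrank ℚ K := Module.finrank_mul_finrank ℚ ↥E K
  have e6 : 0 < finrank ℚ ↥E := Module.finrank_pos
  have hc1 : 0 < Fintype.card (InfinitePlace K) := Fintype.card_pos
  have hc2 : 0 < Fintype.card (InfinitePlace ↥E) := Fintype.card_pos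
  have hcards : Fintype.card (InfinitePlace K) ≤ Fintype.card (InfinitePlace ↥E) := by
    have h1 : Fintype.card (InfinitePlace K) - 1 ≤ Fintype.card (InfinitePlace ↥E) - 1 := hrankle
    omega
  have h2n : finrank ℚ K ≤ 2 * finrank ℚ ↥E := by omega
  have hd2 : finrank ↥E K = 2 := by
    have hge : finrank ℚ ↥E * 2 ≤ finrank ℚ ↥E * finrank ↥E K := Nat.mul_le_mul_left _ hd
    have hle : finrank ℚ ↥E * finrank ↥E K ≤ finrank ℚ ↥E * 2 := by
      rw [e5, mul_comm]; exact h2n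
    exact Nat.eq_of_mul_eq_mul_left e6 (Nat.le_antisymm hle hge)
  have e7 : finrank ℚ ↥E * 2 = finrank ℚ K := by rw [← hd2]; exact e5
  have hr1K : nrRealPlaces K = 0 := by omega
  have hr2E : nrComplexPlaces ↥E = 0 := by omega
  constructor
  · intro σ' hσ'
    have : Fintype.card {www : InfinitePlace K // www.IsReal} = 0 := hr1K
    rw [Fintype.card_eq_zero_iff] at this
    exact this.elim ⟨InfinitePlace.mk σ', isReal_mk_iff.mpr hσ'⟩
  · refine ⟨E, fun τ' => ?_, hd2⟩
    by_contra hτ'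
    have : Fintype.card {www : InfinitePlace ↥E // www.IsComplex} = 0 := hr2E
    rw [Fintype.card_eq_zero_iff] at this
    exact this.elim ⟨InfinitePlace.mk τ', isComplex_mk_iff.mpr hτ'⟩


end AuxStatement13

set_option maxSynthPendingDepth 2 in
set_option synthInstance.maxHeartbeats 1000000 in
set_option maxHeartbeats 4000000 in
open IntermediateField in
/-- In a non-CM field of unit rank at least `2`, every finite-index subgroup of the unit
group contains a unit all of whose nonzero powers generate `K` over `ℚ`. -/
theorem statement13 (hncm : ¬ IsCM K) (hrank : 2 ≤ Units.rank K)
    (G : Subgroup (𝓞 K)ˣ) (hG : G.FiniteIndex) :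
    ∃ u ∈ G, ∀ k : ℤ, k ≠ 0 →
      ℚ⟮(((u : (𝓞 K)ˣ) : 𝓞 K) : K) ^ k⟯ = ⊤ := by
  classical
  by_contra hcon
  push_neg at hcon
  have : Finite ((𝓞 K)ˣ ⧸ G) := Subgroup.finite_quotient_of_finiteIndex (H := G)
  letI : Fintype ((𝓞 K)ˣ ⧸ G) := Fintype.ofFinite _
  set s : Finset ((((𝓞 K)ˣ ⧸ G)) × ((K →+* ℂ) × (K →+* ℂ))) :=
    Finset.univ.filter (fun z => z.2.1 ≠ z.2.2) with hs
  have hGsub : ∀ u ∈ G, ∃ p : (K →+* ℂ) × (K →+* ℂ), p.1 ≠ p.2 ∧ u ∈ HH p.1 p.2 := by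
    intro u hu
    obtain ⟨k, hk, hne⟩ := hcon u hu
    obtain ⟨σ, τ, hst, heq⟩ := exists_embs hne
    refine ⟨(σ, τ), hst, ?_⟩
    have hτ0 : τ (algebraMap (𝓞 K) K (u : 𝓞 K)) ≠ 0 := (map_ne_zero τ).mpr (NumberField.Units.coe_ne_zero u)
    have hval : (embUnitHom σ τ u) ^ k = 1 := by
      apply Units.ext
      rw [Units.val_zpow_eq_zpow_val, Units.val_one, embUnitHom_val, div_zpow,
        ← map_zpow₀ σ, ← map_zpow₀ τ]
      rw [div_eq_one_iff_eq ((map_ne_zero τ).mpr (zpow_ne_zero k (NumberField.Units.coe_ne_zero u)))]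
      exact heq
    exact mem_HH_iff.mpr (isOfFinOrder_iff_zpow_eq_one.mpr ⟨k, hk, hval⟩)
  obtain ⟨z, hz, hfi⟩ := Subgroup.exists_finiteIndex_of_leftCoset_cover
    (G := (𝓞 K)ˣ) (H := fun i => HH i.2.1 i.2.2) (g := fun i => Quotient.out i.1) (s := s) (by
      refine Set.eq_univ_of_forall fun x => Set.mem_iUnion₂.mpr ?_
      have hx : (Quotient.out (QuotientGroup.mk x : (𝓞 K)ˣ ⧸ G))⁻¹ * x ∈ G := by
        rw [← QuotientGroup.eq]
        exact QuotientGroup.out_eq' _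
      obtain ⟨p, hp, hmem⟩ := hGsub _ hx
      exact ⟨(QuotientGroup.mk x, p), Finset.mem_filter.mpr ⟨Finset.mem_univ _, hp⟩,
        (mem_leftCoset_iff _).mpr hmem⟩)
  have hzne : z.2.1 ≠ z.2.2 := (Finset.mem_filter.mp hz).2
  exact hncm (isCM_of_finiteIndex hzne hfi)


end
end

section
/- Let K be a number field and u ∈ O_K^× a unit with ℚ(u) = K. Suppose A : K̄ → K̄ is an ℝ-linear bijection such that A(σ(O_K)) = σ(O_K) and A commutes with multiplication by u, i.e., A(u·x) = u·A(x) for all x ∈ K̄. Then there exists a unit γ ∈ O_K^× such that A(x) = γ·x for all x ∈ K̄. -/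
open NumberField NumberField.InfinitePlace Module Filter

noncomputable section

variable (K : Type) [Field K] [NumberField K]

def Scomm (A : mixedEmbedding.mixedSpace K →ₗ[ℝ] mixedEmbedding.mixedSpace K) :
    Subalgebra ℝ (mixedEmbedding.mixedSpace K) where
  carrier := {y | ∀ x, A (y * x) = y * A x}
  mul_mem' := by
    intro a b ha hb x
    rw [mul_assoc, ha, hb, ← mul_assoc]
  add_mem' := by
    intro a b ha hb x
    rw [add_mul, map_add, ha, hb, add_mul]
  algebraMap_mem' := by
    intro r x
    rw [← Algebra.smul_def, map_smul, Algebra.smul_def]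

theorem mem_Scomm (A : mixedEmbedding.mixedSpace K →ₗ[ℝ] mixedEmbedding.mixedSpace K)
    (u : (𝓞 K)ˣ) (hu : IntermediateField.adjoin ℚ {((u : 𝓞 K) : K)} = ⊤)
    (hcomm : ∀ x : mixedEmbedding.mixedSpace K,
      A (mixedEmbedding K ((u : 𝓞 K) : K) * x) = mixedEmbedding K ((u : 𝓞 K) : K) * A x)
    (t : K) : mixedEmbedding K t ∈ Scomm K A := by
  have hint : IsIntegral ℚ ((u : 𝓞 K) : K) := IsIntegral.of_finite ℚ _
  have ht : t ∈ Algebra.adjoin ℚ {((u : 𝓞 K) : K)} := by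
    rw [← IntermediateField.adjoin_simple_toSubalgebra_of_isAlgebraic hint.isAlgebraic, hu]
    trivial
  have hle : Algebra.adjoin ℚ {((u : 𝓞 K) : K)} ≤
      Subalgebra.comap (mixedEmbedding K).toRatAlgHom
        (Subalgebra.restrictScalars ℚ (Scomm K A)) := by
    apply Algebra.adjoin_le
    intro y hy
    rw [Set.mem_singleton_iff] at hy
    subst hy
    exact hcomm
  exact hle ht

theorem A_eq_mul (A : mixedEmbedding.mixedSpace K →ₗ[ℝ] mixedEmbedding.mixedSpace K)
    (hmem : ∀ t : K, mixedEmbedding K t ∈ Scomm K A)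
    (x : mixedEmbedding.mixedSpace K) : A x = A 1 * x := by
  have : A = LinearMap.mulLeft ℝ (A 1) := by
    apply Basis.ext (mixedEmbedding.latticeBasis K)
    intro i
    rw [mixedEmbedding.latticeBasis_apply]
    have h := hmem (integralBasis K i) 1
    rw [mul_one] at h
    rw [h, LinearMap.mulLeft_apply, mul_comm]
  conv_lhs => rw [this]
  rfl

open IntermediateField in
/-- If `ℚ(u) = K` for a unit `u` and `A` is a real-linear bijection of the mixed space
preserving the lattice `σ(O_K)` and commuting with multiplication by `u`, then `A` is
multiplication by a unit of `O_K`. -/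
theorem statement14 (u : (𝓞 K)ˣ) (hu : ℚ⟮((u : 𝓞 K) : K)⟯ = ⊤)
    (A : mixedEmbedding.mixedSpace K →ₗ[ℝ] mixedEmbedding.mixedSpace K)
    (hbij : Function.Bijective A)
    (hlat : A '' (Set.range fun γ : 𝓞 K => mixedEmbedding K (γ : K)) =
      Set.range fun γ : 𝓞 K => mixedEmbedding K (γ : K))
    (hcomm : ∀ x : mixedEmbedding.mixedSpace K,
      A (mixedEmbedding K ((u : 𝓞 K) : K) * x) = mixedEmbedding K ((u : 𝓞 K) : K) * A x) :
    ∃ γ : (𝓞 K)ˣ, ∀ x : mixedEmbedding.mixedSpace K,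
      A x = mixedEmbedding K (((γ : 𝓞 K) : K)) * x := by
  have hmem := mem_Scomm K A u hu hcomm
  have hA1 := A_eq_mul K A hmem
  have h1mem : (1 : mixedEmbedding.mixedSpace K) ∈
      Set.range fun γ : 𝓞 K => mixedEmbedding K (γ : K) := ⟨1, by simp⟩
  obtain ⟨g, hg⟩ : A 1 ∈ Set.range fun γ : 𝓞 K => mixedEmbedding K (γ : K) := by
    rw [← hlat]; exact ⟨1, h1mem, rfl⟩
  obtain ⟨y, hy, hy1⟩ : (1 : mixedEmbedding.mixedSpace K) ∈
      A '' (Set.range fun γ : 𝓞 K => mixedEmbedding K (γ : K)) := by rw [hlat]; exact h1mem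
  obtain ⟨h, hh⟩ := hy
  beta_reduce at hg hh
  have hgh : (g : K) * (h : K) = 1 := by
    apply NumberField.mixedEmbedding_injective K
    rw [map_mul, map_one, hg, hh, ← hA1 y, hy1]
  have hghO : g * h = 1 := by
    have h2 : ((g * h : 𝓞 K) : K) = ((1 : 𝓞 K) : K) := by push_cast; simpa using hgh
    exact_mod_cast h2
  have hhgO : h * g = 1 := by rw [mul_comm]; exact hghO
  refine ⟨⟨g, h, hghO, hhgO⟩, fun x => ?_⟩
  rw [hA1 x]
  exact congrArg (· * x) hg.symm


end
end

section
/- Let K be a CM number field of degree d = 2s with maximal totally real subfield F, and let η ∈ O_K with η ∉ F. Fix φ, β ∈ F and define g : F̄ → ℝ by g(y) = N_K̄(ι(σ_F(β)) + (φ+η)·ι(y)), i.e., the value of the norm form N_K̄ at the point β + (φ+η)y of K̄. Then g attains a global minimum at the point σ_F(ξ) where ξ = −(φ + (1/2)Tr_{K/F}(η))·β / (φ² + φ·Tr_{K/F}(η) + N_{K/F}(η)) ∈ F (the denominator equals N_{K/F}(φ+η) ≠ 0). Moreover, if β ≠ 0 then the minimum value g(σ_F(ξ)) is strictly positive and σ_F(ξ)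 is the unique minimizer of g, while if β = 0 then the minimum value is 0. -/
open NumberField NumberField.InfinitePlace Module

noncomputable section

variable (F K : Type) [Field F] [Field K] [Algebra F K]
  [NumberField F] [NumberField K]

/-- The restriction to the totally real subfield `F` of a complex embedding of `K`,
viewed as a real embedding of `F`. -/
def resF (hF : ∀ τ : F →+* ℂ, ComplexEmbedding.IsReal τ) (σ : K →+* ℂ) : F →+* ℝ :=
  (hF (σ.comp (algebraMap F K))).embedding

/-- The function `g : F̄ → ℝ`, `g(y) = N_K̄(β + (φ+η)·y)`, where `F̄ = F ⊗ ℝ` is identified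
with `ℝ^{F →+* ℝ}` and `N_K̄(x) = ∏_{i=1}^s |x_i|²` is computed as the product of the
absolute values of `x` at all `2s` complex embeddings of `K`. -/
def normForm (hF : ∀ τ : F →+* ℂ, ComplexEmbedding.IsReal τ) (η : 𝓞 K) (φ β : F)
    (y : (F →+* ℝ) → ℝ) : ℝ :=
  ∏ σ : K →+* ℂ, ‖
    (σ (algebraMap F K β) + σ (algebraMap F K φ + (η : K)) * ((y (resF F K hF σ) : ℝ) : ℂ))‖

/-- The minimizer `ξ = −(φ + (1/2)Tr_{K/F}(η))·β / (φ² + φ·Tr_{K/F}(η) + N_{K/F}(η)) ∈ F`. -/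
def xiMin (η : 𝓞 K) (φ β : F) : F :=
  -(φ + (1 / 2 : F) * Algebra.trace F K (η : K)) * β /
    (φ ^ 2 + φ * Algebra.trace F K (η : K) + Algebra.norm F ((η : K)))

/-- The canonical embedding `σ_F : F → F̄ = ℝ^{F →+* ℝ}`. -/
def sigmaF (ξ : F) : (F →+* ℝ) → ℝ := fun τ => τ ξ

theorem aux_trace_norm
    (hF : ∀ τ : F →+* ℂ, ComplexEmbedding.IsReal τ)
    (hK : ∀ σ : K →+* ℂ, ¬ ComplexEmbedding.IsReal σ)
    (hquad : finrank F K = 2) (σ : K →+* ℂ) (x : K) :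
    σ (algebraMap F K (Algebra.trace F K x)) = σ x + (starRingEnd ℂ) (σ x) ∧
    σ (algebraMap F K (Algebra.norm F x)) = σ x * (starRingEnd ℂ) (σ x) := by
  haveI : FiniteDimensional F K := Module.finite_of_finrank_pos (by rw [hquad]; norm_num)
  classical
  letI : Algebra F ℂ := (σ.comp (algebraMap F K)).toAlgebra
  have halg : ∀ f : F, algebraMap F ℂ f = σ (algebraMap F K f) := fun f => rfl
  let σa : K →ₐ[F] ℂ := { toRingHom := σ, commutes' := fun f => rfl }
  let σb : K →ₐ[F] ℂ :=
    { toRingHom := (starRingEnd ℂ).comp σ,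
      commutes' := fun f => by
        have := RingHom.congr_fun (ComplexEmbedding.isReal_iff.mp
          (hF (σ.comp (algebraMap F K)))) f
        simp at this
        exact this }
  have hne : σa ≠ σb := by
    intro h
    apply hK σ
    rw [ComplexEmbedding.isReal_iff]
    ext z
    have := DFunLike.congr_fun h z
    simpa [σa, σb] using this.symm
  have hcard : Fintype.card (K →ₐ[F] ℂ) = 2 := by rw [AlgHom.card]; exact hquad
  have huniv : (Finset.univ : Finset (K →ₐ[F] ℂ)) = {σa, σb} :=
    (Finset.eq_univ_of_card _ (by rw [Finset.card_pair hne, hcard])).symm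
  constructor
  · rw [← halg, trace_eq_sum_embeddings (E := ℂ), huniv,
      Finset.sum_pair hne]
    rfl
  · rw [← halg, Algebra.norm_eq_prod_embeddings F (E := ℂ), huniv, Finset.prod_pair hne]
    rfl

theorem aux_resF (hF : ∀ τ : F →+* ℂ, ComplexEmbedding.IsReal τ) (σ : K →+* ℂ) (f : F) :
    ((resF F K hF σ f : ℝ) : ℂ) = σ (algebraMap F K f) :=
  (hF (σ.comp (algebraMap F K))).coe_embedding_apply f

theorem aux_eta
    (hF : ∀ τ : F →+* ℂ, ComplexEmbedding.IsReal τ)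
    (hK : ∀ σ : K →+* ℂ, ¬ ComplexEmbedding.IsReal σ)
    (hquad : finrank F K = 2)
    (η : K) (hη : η ∉ (algebraMap F K).range) (σ : K →+* ℂ) :
    (starRingEnd ℂ) (σ η) ≠ σ η := by
  intro h
  have ht := (aux_trace_norm F K hF hK hquad σ η).1
  have h2 : σ (algebraMap F K ((1/2 : F) * Algebra.trace F K η)) = σ η := by
    rw [map_mul, map_mul, ht, h]
    have h12 : σ (algebraMap F K (1/2 : F)) = 1/2 := by
      rw [map_div₀, map_div₀, map_one, map_one, map_ofNat, map_ofNat]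
    rw [h12]; ring
  exact hη ⟨(1/2 : F) * Algebra.trace F K η, σ.injective h2⟩

theorem aux_surj
    (hF : ∀ τ : F →+* ℂ, ComplexEmbedding.IsReal τ)
    (hquad : finrank F K = 2) (τ0 : F →+* ℝ) :
    ∃ σ : K →+* ℂ, resF F K hF σ = τ0 := by
  haveI : FiniteDimensional F K := Module.finite_of_finrank_pos (by rw [hquad]; norm_num)
  letI : Algebra F ℂ := (Complex.ofRealHom.comp τ0).toAlgebra
  haveI : Algebra.IsAlgebraic F K := Algebra.IsAlgebraic.of_finite F K
  let ψ : K →ₐ[F] ℂ := IsAlgClosed.lift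
  refine ⟨ψ.toRingHom, ?_⟩
  ext x
  have h1 : ((resF F K hF ψ.toRingHom x : ℝ) : ℂ) = ψ (algebraMap F K x) :=
    aux_resF F K hF ψ.toRingHom x
  rw [ψ.commutes] at h1
  have h2 : algebraMap F ℂ x = ((τ0 x : ℝ) : ℂ) := rfl
  rw [h2] at h1
  exact_mod_cast h1

/-- For a CM field `K` of degree `2s` over `ℚ`, quadratic over its maximal totally real
subfield `F`, and `η ∈ O_K \ F`, `φ, β ∈ F`, the function `g(y) = N_K̄(β + (φ+η)y)` on
`F̄ ≅ ℝ^s` attains its global minimum at `σ_F(ξ)` with `ξ = xiMin`; the denominator of `ξ`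
is nonzero; if `β ≠ 0` the minimum value is positive and the minimizer is unique, while if
`β = 0` the minimum value is `0`. -/
theorem statement18
    (hF : ∀ τ : F →+* ℂ, ComplexEmbedding.IsReal τ)
    (hK : ∀ σ : K →+* ℂ, ¬ ComplexEmbedding.IsReal σ)
    (hquad : finrank F K = 2)
    (η : 𝓞 K) (hη : (η : K) ∉ (algebraMap F K).range)
    (φ β : F) :
    (φ ^ 2 + φ * Algebra.trace F K (η : K) + Algebra.norm F ((η : K)) ≠ 0) ∧
    (∀ y : (F →+* ℝ) → ℝ,
      normForm F K hF η φ β (sigmaF F (xiMin F K η φ β)) ≤ normForm F K hF η φ β y) ∧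
    (β ≠ 0 →
      0 < normForm F K hF η φ β (sigmaF F (xiMin F K η φ β)) ∧
      ∀ y : (F →+* ℝ) → ℝ,
        normForm F K hF η φ β y = normForm F K hF η φ β (sigmaF F (xiMin F K η φ β)) →
          y = sigmaF F (xiMin F K η φ β)) ∧
    (β = 0 → normForm F K hF η φ β (sigmaF F (xiMin F K η φ β)) = 0) := by
  classical
  haveI : FiniteDimensional F K := Module.finite_of_finrank_pos (by rw [hquad]; norm_num)
  haveI hnonempty : Nonempty (K →+* ℂ) := by
    apply Fintype.card_pos_iff.mp
    rw [NumberField.Embeddings.card K ℂ]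
    exact Module.finrank_pos
  set ξ : F := xiMin F K η φ β with hξdef
  set w : (K →+* ℂ) → ℂ := fun σ => σ (algebraMap F K φ + (η : K)) with hwdef
  have sqpos : ∀ x : ℝ, x ≠ 0 → 0 < x ^ 2 := fun x hx =>
    lt_of_le_of_ne (sq_nonneg x) (Ne.symm (pow_ne_zero 2 hx))
  -- basic facts per sigma
  have hw : ∀ σ : K →+* ℂ, w σ = σ (algebraMap F K φ) + σ (η : K) := fun σ => map_add σ _ _
  have hcw : ∀ σ : K →+* ℂ,
      (starRingEnd ℂ) (w σ) = σ (algebraMap F K φ) + (starRingEnd ℂ) (σ (η : K)) := by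
    intro σ
    rw [hw, map_add]
    congr 1
    rw [← aux_resF F K hF σ φ, Complex.conj_ofReal]
  have himσ : ∀ σ : K →+* ℂ, (w σ).im ≠ 0 := by
    intro σ
    have h1 : (w σ).im = (σ (η : K)).im := by
      rw [hw, Complex.add_im, ← aux_resF F K hF σ φ, Complex.ofReal_im, zero_add]
    rw [h1]
    intro h0
    exact aux_eta F K hF hK hquad (η : K) hη σ (Complex.conj_eq_iff_im.mpr h0)
  have hnsqpos : ∀ σ : K →+* ℂ, 0 < Complex.normSq (w σ) := by
    intro σ
    have := sqpos _ (himσ σ)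
    rw [Complex.normSq_apply]
    nlinarith [sq_nonneg (w σ).re]
  have hDσ : ∀ σ : K →+* ℂ,
      σ (algebraMap F K (φ ^ 2 + φ * Algebra.trace F K (η : K) + Algebra.norm F ((η : K)))) =
        (Complex.normSq (w σ) : ℂ) := by
    intro σ
    obtain ⟨ht, hn⟩ := aux_trace_norm F K hF hK hquad σ (η : K)
    rw [← Complex.mul_conj, hcw, hw]
    simp only [map_add, map_mul, map_pow, ht, hn]
    ring
  have hD0 : φ ^ 2 + φ * Algebra.trace F K (η : K) + Algebra.norm F ((η : K)) ≠ 0 := by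
    intro h
    obtain ⟨σ0⟩ := hnonempty
    have := hDσ σ0
    rw [h, map_zero, map_zero] at this
    have h2 : Complex.normSq (w σ0) = 0 := by exact_mod_cast this.symm
    exact ne_of_gt (hnsqpos σ0) h2
  -- the minimizer coordinates
  have hxiσ : ∀ σ : K →+* ℂ, resF F K hF σ ξ =
      -(resF F K hF σ β * (w σ).re) / Complex.normSq (w σ) := by
    intro σ
    apply Complex.ofReal_injective
    rw [aux_resF F K hF σ ξ]
    obtain ⟨ht, hn⟩ := aux_trace_norm F K hF hK hquad σ (η : K)
    have h12 : σ (algebraMap F K (1/2 : F)) = 1/2 := by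
      rw [map_div₀, map_div₀, map_one, map_one, map_ofNat, map_ofNat]
    have hwre : (2 : ℂ) * ((w σ).re : ℂ) =
        σ (algebraMap F K φ) + σ (η : K) +
          (σ (algebraMap F K φ) + (starRingEnd ℂ) (σ (η : K))) := by
      rw [← hw σ, ← hcw σ, Complex.add_conj]
      push_cast
      ring
    rw [hξdef, xiMin, map_div₀, map_div₀]
    rw [hDσ σ]
    rw [map_mul, map_mul, map_neg, map_neg, map_add, map_add, map_mul, map_mul, h12, ht]
    rw [← aux_resF F K hF σ β]
    have hnsne : (Complex.normSq (w σ) : ℂ) ≠ 0 := by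
      exact_mod_cast (ne_of_gt (hnsqpos σ))
    push_cast
    rw [div_eq_div_iff hnsne hnsne]
    linear_combination (((resF F K hF σ) β : ℂ) * (Complex.normSq (w σ) : ℂ) / 2) * hwre
  -- the quadratic identity
  have hid : ∀ σ : K →+* ℂ, ∀ s : ℝ,
      Complex.normSq (σ (algebraMap F K β) + w σ * (s : ℂ)) =
        Complex.normSq (w σ) * (s - resF F K hF σ ξ) ^ 2
          + (resF F K hF σ β) ^ 2 * (w σ).im ^ 2 / Complex.normSq (w σ) := by
    intro σ s
    rw [hxiσ σ, ← aux_resF F K hF σ β]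
    have h0 : Complex.normSq (w σ) ≠ 0 := ne_of_gt (hnsqpos σ)
    simp only [Complex.normSq_apply, Complex.add_re, Complex.add_im, Complex.mul_re,
      Complex.mul_im, Complex.ofReal_re, Complex.ofReal_im] at h0 ⊢
    have h0' : (w σ).re ^ 2 + (w σ).im ^ 2 ≠ 0 := by rw [sq, sq]; exact h0
    field_simp
    ring
  -- factor at the minimizer
  have hmin : ∀ σ : K →+* ℂ,
      Complex.normSq (σ (algebraMap F K β) + w σ * ((sigmaF F ξ (resF F K hF σ) : ℝ) : ℂ)) =
        (resF F K hF σ β) ^ 2 * (w σ).im ^ 2 / Complex.normSq (w σ) := by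
    intro σ
    have := hid σ (resF F K hF σ ξ)
    rw [sub_self] at this
    simpa [sigmaF] using this
  refine ⟨hD0, ?_, ?_, ?_⟩
  · -- global minimum
    intro y
    unfold normForm
    refine Finset.prod_le_prod (fun σ _ => norm_nonneg _) (fun σ _ => ?_)
    rw [Complex.norm_def, Complex.norm_def]
    apply Real.sqrt_le_sqrt
    rw [hmin σ, hid σ (y (resF F K hF σ))]
    have h1 := mul_nonneg (Complex.normSq_nonneg (w σ))
      (sq_nonneg (y (resF F K hF σ) - resF F K hF σ ξ))
    linarith
  · -- beta ≠ 0
    intro hβ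
    have hfacpos : ∀ σ : K →+* ℂ,
        0 < ‖(σ (algebraMap F K β) +
          w σ * ((sigmaF F ξ (resF F K hF σ) : ℝ) : ℂ))‖ := by
      intro σ
      rw [Complex.norm_def]
      apply Real.sqrt_pos.mpr
      rw [hmin σ]
      have hrβ : resF F K hF σ β ≠ 0 := (map_ne_zero (resF F K hF σ)).mpr hβ
      exact div_pos (mul_pos (sqpos _ hrβ) (sqpos _ (himσ σ))) (hnsqpos σ)
    constructor
    · unfold normForm
      exact Finset.prod_pos fun σ _ => hfacpos σ
    · intro y hy
      funext τ0
      by_contra hc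
      obtain ⟨σ, rfl⟩ := aux_surj F K hF hquad τ0
      have hlt : normForm F K hF η φ β (sigmaF F ξ) < normForm F K hF η φ β y := by
        unfold normForm
        refine Finset.prod_lt_prod (fun σ' _ => hfacpos σ') (fun σ' _ => ?_)
          ⟨σ, Finset.mem_univ σ, ?_⟩
        · rw [Complex.norm_def, Complex.norm_def]
          apply Real.sqrt_le_sqrt
          rw [hmin σ', hid σ' (y (resF F K hF σ'))]
          have h1 := mul_nonneg (Complex.normSq_nonneg (w σ'))
            (sq_nonneg (y (resF F K hF σ') - resF F K hF σ' ξ))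
          linarith
        · rw [Complex.norm_def, Complex.norm_def]
          apply Real.sqrt_lt_sqrt (Complex.normSq_nonneg _)
          rw [hmin σ, hid σ (y (resF F K hF σ))]
          have hyne : y (resF F K hF σ) - resF F K hF σ ξ ≠ 0 := by
            intro h
            exact hc (by simpa [sigmaF] using sub_eq_zero.mp h)
          have h1 := mul_pos (hnsqpos σ) (sqpos _ hyne)
          linarith
      rw [hy] at hlt
      exact lt_irrefl _ hlt
  · -- beta = 0
    intro hβ
    subst hβ
    have hxi0 : ξ = 0 := by rw [hξdef]; simp [xiMin]
    obtain ⟨σ0⟩ := hnonempty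
    unfold normForm
    apply Finset.prod_eq_zero (Finset.mem_univ σ0)
    simp [sigmaF, hxi0]


end
end
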